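/- arXiv:2212.03748 — 3 statements merged into one kernel-verified Lean document; each statement's English description precedes it below -/
import Mathlib

section
/- The probability that ℓ independent uniformly random elements of the matrix ring M_n(𝔽_q) generate it as a left module over itself equals ∏_{i=0}^{n-1} (1 - q^i / q^{ℓ n}). -/
/-!
The left ideal of `M_n(𝔽_q)` generated by `x₁, …, x_ℓ` consists of the matrices all of whose rows
lie in the span of the `nℓ` rows of the `xᵢ`. So the tuple generates iff these rows span `𝔽_qⁿ`,
i.e. iff the `n` columns of the stacked `nℓ × n` matrix are linearly independent in `𝔽_q^{nℓ}`.
Independent `n`-tuples in `𝔽_q^{nℓ}` are counted by choosing each vector outside the span of the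
previous ones: `∏_{i<n} (q^{nℓ} - q^i)` of them among `q^{nℓ·n}` tuples.
-/

open Finset

namespace Matrix

section LeftIdeal

variable {R ι m : Type*} [Semiring R] [Fintype ι] [Fintype m] [DecidableEq m]

theorem mem_span_range_iff_forall_row_mem (x : ι → Matrix m m R) (y : Matrix m m R) :
    y ∈ Submodule.span (Matrix m m R) (Set.range x) ↔
      ∀ j, y j ∈ Submodule.span R (Set.range fun p : ι × m => x p.1 p.2) := by
  simp only [Submodule.mem_span_range_iff_exists_fun, smul_eq_mul]
  constructor
  · rintro ⟨a, rfl⟩ j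
    refine ⟨fun p => a p.1 j p.2, ?_⟩
    ext t
    simp [Matrix.sum_apply, Matrix.mul_apply, Fintype.sum_prod_type, Finset.sum_apply]
  · intro h
    choose c hc using h
    refine ⟨fun i => of fun j k => c j (i, k), ?_⟩
    ext j t
    rw [← hc j]
    simp [Matrix.sum_apply, Matrix.mul_apply, Fintype.sum_prod_type, Finset.sum_apply]

theorem span_range_eq_top_iff_span_rows_eq_top (x : ι → Matrix m m R) :
    Submodule.span (Matrix m m R) (Set.range x) = ⊤ ↔
      Submodule.span R (Set.range fun p : ι × m => x p.1 p.2) = ⊤ := by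
  simp only [Submodule.eq_top_iff', mem_span_range_iff_forall_row_mem]
  refine ⟨fun h w => ?_, fun h y j => h (y j)⟩
  rcases isEmpty_or_nonempty m with hm | ⟨⟨j⟩⟩
  · simp [Subsingleton.elim w 0]
  · exact h (of fun _ => w) j

end LeftIdeal

variable {K m n : Type*} [Field K] [Fintype m] [Fintype n]

theorem span_row_eq_top_iff_linearIndependent_col (M : Matrix m n K) :
    Submodule.span K (Set.range M.row) = ⊤ ↔ LinearIndependent K M.col := by
  rw [linearIndependent_iff_card_eq_finrank_span, Set.finrank, ← rank_eq_finrank_span_cols,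
    rank_eq_finrank_span_row, Submodule.eq_top_iff_finrank_eq, Module.finrank_fintype_fun_eq_card,
    eq_comm]

theorem span_range_eq_top_iff_linearIndependent {ι : Type*} [Fintype ι] [DecidableEq m]
    (x : ι → Matrix m m K) :
    Submodule.span (Matrix m m K) (Set.range x) = ⊤ ↔
      LinearIndependent K (fun k (p : ι × m) => x p.1 p.2 k) :=
  (span_range_eq_top_iff_span_rows_eq_top x).trans
    (span_row_eq_top_iff_linearIndependent_col (of fun p : ι × m => x p.1 p.2))

end Matrix

/-- Unlike `card_linearIndependent`, this holds for every `k`: stated in `ℤ`, both sides vanish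
once `k` exceeds the dimension, the factor `i = finrank K V` being zero. -/
theorem card_linearIndependent_eq_prod {K V : Type*} [DivisionRing K] [AddCommGroup V]
    [Module K V] [Fintype K] [Finite V] (k : ℕ) :
    (Nat.card {s : Fin k → V // LinearIndependent K s} : ℤ) =
      ∏ i ∈ range k, ((Fintype.card K : ℤ) ^ Module.finrank K V - Fintype.card K ^ i) := by
  rcases le_or_gt k (Module.finrank K V) with hk | hk
  · rw [card_linearIndependent hk, Fin.prod_univ_eq_prod_range (fun i => _ - _ ^ i), Nat.cast_prod]
    refine prod_congr rfl fun i hi => ?_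
    have hi : i ≤ Module.finrank K V := (mem_range.1 hi).le.trans hk
    rw [Nat.cast_sub (Nat.pow_le_pow_right Fintype.card_pos hi), Nat.cast_pow, Nat.cast_pow]
  · have : IsEmpty {s : Fin k → V // LinearIndependent K s} :=
      ⟨fun s => hk.not_ge (by simpa using s.2.fintype_card_le_finrank)⟩
    rw [Nat.card_of_isEmpty, Nat.cast_zero, prod_eq_zero (mem_range.2 hk) (sub_self _)]

theorem prob_generate_matrix_ring_general (F : Type) [Field F] [Fintype F] (q : ℕ)
    (hF : Fintype.card F = q) (n ℓ : ℕ) :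
    (Nat.card {x : Fin ℓ → Matrix (Fin n) (Fin n) F //
        Submodule.span (Matrix (Fin n) (Fin n) F) (Set.range x) = ⊤} : ℝ) /
      (Nat.card (Fin ℓ → Matrix (Fin n) (Fin n) F) : ℝ)
      = ∏ i ∈ range n, (1 - (q : ℝ) ^ i / (q : ℝ) ^ (ℓ * n)) := by
  have hq : (q : ℝ) ≠ 0 := by rw [← hF]; exact_mod_cast Fintype.card_ne_zero
  let reshape : (Fin ℓ → Matrix (Fin n) (Fin n) F) ≃ (Fin n → Fin ℓ × Fin n → F) :=
    ⟨fun x k p => x p.1 p.2 k, fun v i j k => v k (i, j), fun _ => rfl, fun _ => rfl⟩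
  have hnum : (Nat.card {x : Fin ℓ → Matrix (Fin n) (Fin n) F //
      Submodule.span (Matrix (Fin n) (Fin n) F) (Set.range x) = ⊤} : ℝ) =
        ∏ i ∈ range n, ((q : ℝ) ^ (ℓ * n) - q ^ i) := by
    rw [Nat.card_congr (reshape.subtypeEquiv (q := fun v => LinearIndependent F v)
      Matrix.span_range_eq_top_iff_linearIndependent)]
    have := card_linearIndependent_eq_prod (K := F) (V := Fin ℓ × Fin n → F) n
    rw [Module.finrank_fintype_fun_eq_card, Fintype.card_prod, Fintype.card_fin,
      Fintype.card_fin, hF] at this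
    exact_mod_cast this
  have hden : (Nat.card (Fin ℓ → Matrix (Fin n) (Fin n) F) : ℝ) =
      ∏ _i ∈ range n, (q : ℝ) ^ (ℓ * n) := by
    change (Nat.card (Fin ℓ → Fin n → Fin n → F) : ℝ) = _
    rw [Nat.card_fun, Nat.card_fun, Nat.card_fun, prod_const, card_range,
      Nat.card_eq_fintype_card, hF]
    simp only [Nat.card_fin]
    push_cast
    ring
  rw [hnum, hden, ← prod_div_distrib]
  exact prod_congr rfl fun i _ => by rw [sub_div, div_self (pow_ne_zero _ hq)]

/-- The probability that `ℓ` independent uniformly random elements of the matrix ring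
`M_n(𝔽_q)` generate it as a left module over itself equals
`∏_{i=0}^{n-1} (1 - q^i / q^(ℓ n))`. -/
theorem prob_generate_matrix_ring (F : Type) [Field F] [Fintype F] (q : ℕ)
    (hF : Fintype.card F = q) (n ℓ : ℕ) (hn : 1 ≤ n) (hℓ : 1 ≤ ℓ) :
    (Nat.card {x : Fin ℓ → Matrix (Fin n) (Fin n) F //
        Submodule.span (Matrix (Fin n) (Fin n) F) (Set.range x) = ⊤} : ℝ) /
      (Nat.card (Fin ℓ → Matrix (Fin n) (Fin n) F) : ℝ)
      = ∏ i ∈ range n, (1 - (q : ℝ) ^ i / (q : ℝ) ^ (ℓ * n)) :=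
  prob_generate_matrix_ring_general F q hF n ℓ
end

section
/- For every prime p, every integer n ≥ 1, every integer k ≥ 1, and every real s > 1, ∑_{j=1}^∞ (1/j) · p^{-s j k n} · (p^{jk n} - 1)/(p^{jk} - 1) = ∑_{i=0}^{n-1} -log(1 - p^{k i - s k n}); equivalently, exp of the left-hand side equals ∏_{i=0}^{n-1} (1 - p^{k i}/p^{s k n})^{-1}. -/
/-!
For `r = p^{jk}` the quotient `(r^n - 1)/(r - 1)` is the geometric sum `∑_{i<n} r^i`, so the
`j`-th term on the left is `∑_{i<n} x_i^j / j` with `x_i = p^{ki - skn}`, and `0 < x_i < 1`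
because `s > 1`. Exchanging the finite sum over `i` with the sum over `j` and using
`∑_{j≥1} x^j/j = -log(1 - x)` gives the right-hand side.
-/

open Finset

lemma Real.hasSum_pnat_pow_div_neg_log {x : ℝ} (hx : |x| < 1) :
    HasSum (fun j : ℕ+ => x ^ (j : ℕ) / (j : ℕ)) (-Real.log (1 - x)) := by
  rw [hasSum_pnat_iff_hasSum_succ (f := fun m : ℕ => x ^ m / m)]
  exact_mod_cast Real.hasSum_pow_div_log_of_abs_lt_one hx

lemma rpow_natCast_mul_sub_lt_one {q s : ℝ} (hq : 1 < q) (hs : 1 ≤ s) {k i n : ℕ} (hk : 0 < k)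
    (hi : i < n) : q ^ ((k * i : ℕ) - s * (k * n : ℕ)) < 1 := by
  apply Real.rpow_lt_one_of_one_lt_of_neg hq
  have hki : ((k * i : ℕ) : ℝ) < (k * n : ℕ) := by exact_mod_cast Nat.mul_lt_mul_of_pos_left hi hk
  nlinarith [(Nat.cast_nonneg (k * n) : (0 : ℝ) ≤ (k * n : ℕ))]

lemma rpow_natCast_mul_sub_pow {q : ℝ} (hq : 0 < q) (s : ℝ) (k i n j : ℕ) :
    (q ^ ((k * i : ℕ) - s * (k * n : ℕ))) ^ j = q ^ (-(s * (j * k * n))) * (q ^ (j * k)) ^ i := by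
  rw [← Real.rpow_mul_natCast hq.le, ← pow_mul, ← Real.rpow_natCast q (j * k * i),
    ← Real.rpow_add hq]
  push_cast
  ring_nf

lemma one_div_mul_rpow_mul_geom_eq_sum {q : ℝ} (hq : 1 < q) (s : ℝ) {k j : ℕ} (hk : 0 < k)
    (hj : 0 < j) (n : ℕ) :
    1 / (j : ℝ) * q ^ (-(s * (j * k * n))) * ((q ^ (j * k * n) - 1) / (q ^ (j * k) - 1)) =
      ∑ i ∈ range n, (q ^ ((k * i : ℕ) - s * (k * n : ℕ))) ^ j / j := by
  have hr : q ^ (j * k) ≠ 1 := (one_lt_pow₀ hq (Nat.mul_pos hj hk).ne').ne'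
  rw [pow_mul q (j * k) n, ← geom_sum_eq hr, mul_sum]
  refine sum_congr rfl fun i _ => ?_
  rw [rpow_natCast_mul_sub_pow (by linarith) s k i n j]
  ring

theorem zeta_matrix_algebra_general (p : ℕ) (hp : p.Prime) (n k : ℕ) (hk : 1 ≤ k)
    (s : ℝ) (hs : 1 < s) :
    (∑' j : ℕ+, (1 / (j : ℝ)) * (p : ℝ) ^ (-(s * ((j : ℕ) * k * n))) *
        (((p : ℝ) ^ ((j : ℕ) * k * n) - 1) / ((p : ℝ) ^ ((j : ℕ) * k) - 1))) =
      ∑ i ∈ range n, -Real.log (1 - (p : ℝ) ^ ((k * i : ℕ) - s * (k * n : ℕ))) := by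
  have hp1 : (1 : ℝ) < p := by exact_mod_cast hp.one_lt
  have hx : ∀ i ∈ range n, |(p : ℝ) ^ ((k * i : ℕ) - s * (k * n : ℕ))| < 1 := fun i hi => by
    rw [abs_of_nonneg (by positivity)]
    exact rpow_natCast_mul_sub_lt_one hp1 hs.le hk (mem_range.1 hi)
  have hlog := hasSum_sum fun i hi => Real.hasSum_pnat_pow_div_neg_log (hx i hi)
  refine (hlog.congr_fun fun j => ?_).tsum_eq
  exact one_div_mul_rpow_mul_geom_eq_sum hp1 s hk j.pos n

/-- The zeta function of the matrix algebra `M_n(𝔽_{p^k})`: for every prime `p`, integers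
`n, k ≥ 1` and real `s > 1`,
`∑_{j≥1} (1/j) p^{-sjkn} (p^{jkn}-1)/(p^{jk}-1) = ∑_{i=0}^{n-1} -log(1 - p^{ki - skn})`;
equivalently, the exponential of the left side equals
`∏_{i=0}^{n-1} (1 - p^{ki}/p^{skn})⁻¹`. -/
theorem zeta_matrix_algebra (p : ℕ) (hp : p.Prime) (n k : ℕ) (hn : 1 ≤ n) (hk : 1 ≤ k)
    (s : ℝ) (hs : 1 < s) :
    (∑' j : ℕ+, (1 / (j : ℝ)) * (p : ℝ) ^ (-(s * ((j : ℕ) * k * n))) *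
        (((p : ℝ) ^ ((j : ℕ) * k * n) - 1) / ((p : ℝ) ^ ((j : ℕ) * k) - 1))) =
      ∑ i ∈ range n, -Real.log (1 - (p : ℝ) ^ ((k * i : ℕ) - s * (k * n : ℕ))) :=
  zeta_matrix_algebra_general p hp n k hk s hs
end

section
/- For every real α ≥ 0, the series ∑_{p prime, p ≥ 5} ⌊p^α⌋ · p^{-2s} · (p+1) diverges for every real s < α/2 + 1, and converges for every real s > α/2 + 1. -/
open Real

private lemma sl2_aux_bounds (α : ℝ) (hα : 0 ≤ α) (s : ℝ) (p : {p : Nat.Primes // 5 ≤ (p : ℕ)}) :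
    (1/2) * ((p.1 : ℕ) : ℝ) ^ (α - 2*s + 1) ≤
      (⌊((p.1 : ℕ) : ℝ) ^ α⌋₊ : ℝ) * ((p.1 : ℕ) : ℝ) ^ (-(2 * s)) * (((p.1 : ℕ) : ℝ) + 1) ∧
    (⌊((p.1 : ℕ) : ℝ) ^ α⌋₊ : ℝ) * ((p.1 : ℕ) : ℝ) ^ (-(2 * s)) * (((p.1 : ℕ) : ℝ) + 1) ≤
      2 * ((p.1 : ℕ) : ℝ) ^ (α - 2*s + 1) := by
  set x : ℝ := ((p.1 : ℕ) : ℝ) with hxdef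
  have hx5 : (5:ℝ) ≤ x := by rw [hxdef]; exact_mod_cast p.2
  have hx0 : (0:ℝ) < x := by linarith
  have hsplit : x ^ (α - 2*s + 1) = x ^ α * x ^ (-(2*s)) * x := by
    rw [show α - 2*s + 1 = α + (-(2*s)) + 1 by ring, Real.rpow_add hx0, Real.rpow_add hx0,
      Real.rpow_one]
  have hαpos : (0:ℝ) ≤ x ^ α := Real.rpow_nonneg hx0.le α
  have hfl_le : (⌊x ^ α⌋₊ : ℝ) ≤ x ^ α := Nat.floor_le hαpos
  have h1 : (1:ℝ) ≤ x ^ α := Real.one_le_rpow (by linarith) hα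
  have h1fl : (1:ℝ) ≤ (⌊x ^ α⌋₊ : ℝ) := by
    have : (1:ℕ) ≤ ⌊x ^ α⌋₊ := Nat.le_floor (by exact_mod_cast h1)
    exact_mod_cast this
  have hfl_ge : x ^ α / 2 ≤ (⌊x ^ α⌋₊ : ℝ) := by
    rcases le_or_gt 2 (x ^ α) with h2 | h2
    · have := Nat.sub_one_lt_floor (x ^ α)
      linarith
    · linarith
  have hs0 : (0:ℝ) ≤ x ^ (-(2*s)) := Real.rpow_nonneg hx0.le _
  constructor
  · calc (1/2) * x ^ (α - 2*s + 1) = (x ^ α / 2) * x ^ (-(2*s)) * x := by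
          rw [hsplit]; ring
      _ ≤ (⌊x ^ α⌋₊ : ℝ) * x ^ (-(2*s)) * (x + 1) := by
          gcongr
          linarith
  · calc (⌊x ^ α⌋₊ : ℝ) * x ^ (-(2*s)) * (x + 1) ≤ x ^ α * x ^ (-(2*s)) * (2 * x) := by
          gcongr; linarith
      _ = 2 * x ^ (α - 2*s + 1) := by rw [hsplit]; ring

private lemma sl2_aux_summable_iff (r : ℝ) :
    Summable (fun p : {p : Nat.Primes // 5 ≤ (p : ℕ)} => ((p.1 : ℕ) : ℝ) ^ r) ↔ r < -1 := by
  rw [← Nat.Primes.summable_rpow (r := r)]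
  set S : Set Nat.Primes := {p | 5 ≤ (p : ℕ)} with hS
  have hfin : Finite ↥Sᶜ := by
    have : Sᶜ ⊆ (fun p : Nat.Primes => (p : ℕ)) ⁻¹' (Set.Iio 5) := by
      intro p hp
      simpa [S, Set.mem_compl_iff, not_le] using hp
    have hf : (Sᶜ : Set Nat.Primes).Finite :=
      Set.Finite.subset ((Set.finite_Iio 5).preimage
        (Set.injOn_of_injective Nat.Primes.coe_nat_injective)) this
    exact hf.to_subtype
  constructor
  · intro h
    rw [← summable_subtype_and_compl (s := S)]
    exact ⟨h, Summable.of_finite⟩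
  · intro h
    exact h.subtype S

/-- For every real `α ≥ 0`, the series `∑_{p prime, p ≥ 5} ⌊p^α⌋ p^{-2s} (p+1)` diverges
for every real `s < α/2 + 1` and converges for every real `s > α/2 + 1`. -/
theorem sl2_series_convergence (α : ℝ) (hα : 0 ≤ α) :
    (∀ s : ℝ, s < α / 2 + 1 →
      ¬ Summable (fun p : {p : Nat.Primes // 5 ≤ (p : ℕ)} =>
        (⌊((p.1 : ℕ) : ℝ) ^ α⌋₊ : ℝ) * ((p.1 : ℕ) : ℝ) ^ (-(2 * s)) * (((p.1 : ℕ) : ℝ) + 1))) ∧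
    (∀ s : ℝ, α / 2 + 1 < s →
      Summable (fun p : {p : Nat.Primes // 5 ≤ (p : ℕ)} =>
        (⌊((p.1 : ℕ) : ℝ) ^ α⌋₊ : ℝ) * ((p.1 : ℕ) : ℝ) ^ (-(2 * s)) * (((p.1 : ℕ) : ℝ) + 1))) := by
  constructor
  · intro s hs hsum
    have h2 : Summable (fun p : {p : Nat.Primes // 5 ≤ (p : ℕ)} =>
        (1/2) * ((p.1 : ℕ) : ℝ) ^ (α - 2*s + 1)) := by
      refine Summable.of_nonneg_of_le (fun p => ?_) (fun p => (sl2_aux_bounds α hα s p).1) hsum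
      positivity
    have h3 : Summable (fun p : {p : Nat.Primes // 5 ≤ (p : ℕ)} =>
        ((p.1 : ℕ) : ℝ) ^ (α - 2*s + 1)) := by
      have := h2.mul_left 2
      simpa [mul_assoc] using this
    have := (sl2_aux_summable_iff (α - 2*s + 1)).mp h3
    linarith
  · intro s hs
    have h3 : Summable (fun p : {p : Nat.Primes // 5 ≤ (p : ℕ)} =>
        ((p.1 : ℕ) : ℝ) ^ (α - 2*s + 1)) :=
      (sl2_aux_summable_iff (α - 2*s + 1)).mpr (by linarith)
    refine Summable.of_nonneg_of_le (fun p => ?_) (fun p => (sl2_aux_bounds α hα s p).2)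
      (h3.mul_left 2)
    have hx0 : (0:ℝ) < ((p.1 : ℕ) : ℝ) := by
      have : (5:ℝ) ≤ ((p.1 : ℕ) : ℝ) := by exact_mod_cast p.2
      linarith
    positivity
end
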